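/- Fix k ≥ 1 and D₁,...,D_k ≥ 1 and let K = ∏ᵢ [1, Dᵢ]. For d = (d₁,...,d_k) ∈ K and i ∈ [1,k], define d^{+i} by d^{+i}_j = 1 for j < i, d^{+i}_i = dᵢ + 1, and d^{+i}_j = d_j for j > i. Define K_d = K ∩ ({d} ∪ {d^{+i} : ∃ j < i, d_j ≠ 1}), K⁺_d = K ∩ {d^{+i} : 1 ≤ i ≤ k}, Z(d) = {d↾ⁱ : i ∈ [1,k], dᵢ ≠ 1} where (d↾ⁱ)_j = 1 for j < i and (d↾ⁱ)_j = d_j for j ≥ i. Suppose d is not the reverse-lexicographically greatest element of K and let d⁺ be its immediate successor in the reverse lexicographic order on K. Then K_{d⁺} ⊆ K⁺_d ∪ ⋃_{e ∈ Z(d)} (K_e ∖ {e}). -/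
import Mathlib


/-- Reverse lexicographic order on tuples: compare at the last coordinate where they differ. -/
def revlt {k : ℕ} (d d' : Fin k → ℕ) : Prop :=
  ∃ i, d i < d' i ∧ ∀ j, i < j → d j = d' j

/-- `d^{+i}`: set the coordinates below `i` to 1, increment coordinate `i`, keep the rest. -/
def plusAt {k : ℕ} (d : Fin k → ℕ) (i : Fin k) : Fin k → ℕ :=
  fun j => if j < i then 1 else if j = i then d i + 1 else d j

/-- `d↾ⁱ`: set the coordinates below `i` to 1, keep the rest. -/
def restr {k : ℕ} (d : Fin k → ℕ) (i : Fin k) : Fin k → ℕ :=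
  fun j => if j < i then 1 else d j

lemma revlt_asymm {k : ℕ} {a b : Fin k → ℕ} (h1 : revlt a b) (h2 : revlt b a) : False := by
  obtain ⟨i, hi, hia⟩ := h1
  obtain ⟨j, hj, hja⟩ := h2
  rcases lt_trichotomy i j with h | h | h
  · have := hia j h; omega
  · subst h; omega
  · have := hja i h; omega

/-- If `d⁺` is the reverse-lexicographic successor of `d` in `K`, then
`K_{d⁺} ⊆ K⁺_d ∪ ⋃_{e ∈ Z(d)} (K_e ∖ {e})`. -/
theorem stmt_15 (k : ℕ) (hk : 1 ≤ k) (D : Fin k → ℕ) (hD : ∀ i, 1 ≤ D i)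
    (K : Set (Fin k → ℕ)) (hK : K = {d | ∀ i, 1 ≤ d i ∧ d i ≤ D i})
    (Kd : (Fin k → ℕ) → Set (Fin k → ℕ))
    (hKd : ∀ e, Kd e =
      K ∩ ({e} ∪ {f | ∃ i : Fin k, f = plusAt e i ∧ ∃ j : Fin k, j < i ∧ e j ≠ 1}))
    (Kplus : (Fin k → ℕ) → Set (Fin k → ℕ))
    (hKplus : ∀ e, Kplus e = K ∩ {f | ∃ i : Fin k, f = plusAt e i})
    (d dsucc : Fin k → ℕ) (hd : d ∈ K)
    (hnotmax : ∃ e ∈ K, revlt d e)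
    (hsucc : dsucc ∈ K ∧ revlt d dsucc ∧
      ∀ e ∈ K, revlt d e → e = dsucc ∨ revlt dsucc e) :
    Kd dsucc ⊆ Kplus d ∪
      ⋃ i ∈ {i : Fin k | d i ≠ 1}, (Kd (restr d i) \ {restr d i}) := by
  obtain ⟨hdsK, hdlt, hmin⟩ := hsucc
  subst hK
  have hdK' : ∀ i, 1 ≤ d i ∧ d i ≤ D i := hd
  have hex : ∃ i : Fin k, d i < D i := by
    obtain ⟨x, hxK, hrx⟩ := hnotmax
    obtain ⟨i, hi, -⟩ := hrx
    exact ⟨i, lt_of_lt_of_le hi (hxK i).2⟩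
  obtain ⟨i₀, hi₀mem, hi₀min⟩ :=
    Finset.exists_min_image (Finset.univ.filter fun i => d i < D i) id
      (by obtain ⟨i, hi⟩ := hex; exact ⟨i, by simp [hi]⟩)
  simp only [Finset.mem_filter, Finset.mem_univ, true_and] at hi₀mem
  have hmin' : ∀ n : Fin k, n < i₀ → d n = D n := by
    intro n hn
    by_contra hne
    have h1 : d n < D n := lt_of_le_of_ne (hdK' n).2 hne
    have h2 := hi₀min n (by simp [h1])
    simp only [id] at h2
    exact absurd hn (not_lt.mpr h2)
  set e := plusAt d i₀ with he
  have heval_gt : ∀ j : Fin k, i₀ < j → e j = d j := by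
    intro j hj
    simp only [he, plusAt]
    rw [if_neg (lt_asymm hj), if_neg hj.ne']
  have heK : e ∈ {d | ∀ i, 1 ≤ d i ∧ d i ≤ D i} := by
    intro j
    simp only [he, plusAt]
    split_ifs with h1 h2
    · exact ⟨le_refl 1, hD j⟩
    · subst h2; constructor <;> omega
    · exact hdK' j
  have hde : revlt d e := by
    refine ⟨i₀, ?_, fun j hj => (heval_gt j hj).symm⟩
    simp [he, plusAt]
  have hbetween : ∀ x ∈ {d | ∀ i : Fin k, 1 ≤ d i ∧ d i ≤ D i},
      revlt d x → revlt x e → False := by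
    intro x hxK hdx hxe
    obtain ⟨m, hm, hma⟩ := hxe
    rcases lt_trichotomy m i₀ with h | h | h
    · have h1 : e m = 1 := by simp [he, plusAt, h]
      have := (hxK m).1; omega
    · subst h
      have hem : e m = d m + 1 := by simp [he, plusAt]
      have hagree : ∀ j, m < j → x j = d j := by
        intro j hj
        rw [hma j hj, heval_gt j hj]
      rcases lt_or_eq_of_le (by omega : x m ≤ d m) with hlt | heq
      · exact revlt_asymm hdx ⟨m, hlt, hagree⟩
      · obtain ⟨n, hn, hna⟩ := hdx
        have hnm : n < m := by
          rcases lt_trichotomy n m with h|h|h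
          · exact h
          · subst h; omega
          · have := hagree n h; omega
        have := hmin' n hnm
        have := (hxK n).2
        omega
    · have hem : e m = d m := heval_gt m h
      have hagree : ∀ j, m < j → x j = d j := by
        intro j hj
        rw [hma j hj, heval_gt j (lt_trans h hj)]
      exact revlt_asymm hdx ⟨m, by omega, hagree⟩
  have hdse : dsucc = e := by
    rcases hmin e heK hde with h | h
    · exact h.symm
    · exact (hbetween dsucc hdsK hdlt h).elim
  intro f hf
  rw [hKd] at hf
  obtain ⟨hfK, hf2⟩ := hf
  left
  rw [hKplus]
  refine ⟨hfK, ?_⟩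
  rcases hf2 with hf2 | ⟨i, hfi, j, hji, hj1⟩
  · exact ⟨i₀, by rw [Set.mem_singleton_iff.mp hf2, hdse]⟩
  · have hi₀j : i₀ ≤ j := by
      by_contra hcon
      push_neg at hcon
      apply hj1
      rw [hdse]; simp [he, plusAt, hcon]
    have hi₀i : i₀ < i := lt_of_le_of_lt hi₀j hji
    refine ⟨i, ?_⟩
    rw [hfi, hdse]
    funext m
    simp only [he, plusAt]
    rcases lt_trichotomy m i with h | h | h
    · rw [if_pos h, if_pos h]
    · subst h
      rw [if_neg (lt_irrefl _), if_neg (lt_irrefl _), if_pos rfl, if_pos rfl,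
        if_neg (lt_asymm hi₀i), if_neg hi₀i.ne']
    · have hi₀m : i₀ < m := lt_trans hi₀i h
      rw [if_neg (lt_asymm h), if_neg (lt_asymm h), if_neg h.ne', if_neg h.ne',
        if_neg (lt_asymm hi₀m), if_neg hi₀m.ne']
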